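/- Let k be a field and let A and B be finite-dimensional symmetric k-algebras which are separably equivalent via k-central context bimodules (P, Q, ν, μ). Then A and B are symmetric separably equivalent: there exist a context (P', Q', ν', μ') of left and right finite projective k-central bimodules with ν': P' ⊗_B Q' → A a split A-A-bimodule epimorphism, μ': Q' ⊗_A P' → B a split B-B-bimodule epimorphism, an element Σᵢ q'ᵢ ⊗ p'ᵢ ∈ Q' ⊗_A P' with Σᵢ ν'(p ⊗ q'ᵢ)·p'ᵢ = p and Σᵢ q'ᵢ·ν'(p'ᵢ ⊗ q) = q, and an element Σⱼ pⱼ ⊗ qⱼ ∈ P' ⊗_B Q' with Σⱼ μ'(q ⊗ pⱼ)·qⱼ = q and Σⱼ pⱼ·μ'(qⱼ ⊗ p) = p, for all p ∈ P', q ∈ Q'. -/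

import Mathlib

/-! ### A balanced tensor product of a right module and a left module
over a possibly noncommutative ring, constructed as a quotient of the
`ℤ`-tensor product. -/

open MulOpposite
open scoped TensorProduct

section BalCore

variable (R : Type*) [Ring R] (M : Type*) [AddCommGroup M] [Module Rᵐᵒᵖ M]
  (N : Type*) [AddCommGroup N] [Module R N]

/-- The subgroup of relations defining the balanced tensor product. -/
def balRel : Submodule ℤ (TensorProduct ℤ M N) :=
  Submodule.span ℤ {x | ∃ (m : M) (r : R) (n : N), x = (op r • m) ⊗ₜ[ℤ] n - m ⊗ₜ[ℤ] (r • n)}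

/-- The balanced tensor product `M ⊗[R] N` of a right `R`-module `M` and a
left `R`-module `N`. -/
def Bal : Type _ := TensorProduct ℤ M N ⧸ balRel R M N

noncomputable instance : AddCommGroup (Bal R M N) := Submodule.Quotient.addCommGroup _

variable {M N}

/-- The canonical image of `m ⊗ n` in the balanced tensor product. -/
noncomputable def Bal.tmul (m : M) (n : N) : Bal R M N := Submodule.Quotient.mk (m ⊗ₜ[ℤ] n)

theorem Bal.add_tmul (m m' : M) (n : N) :
    Bal.tmul R (m + m') n = Bal.tmul R m n + Bal.tmul R m' n := by
  show Submodule.Quotient.mk _ = _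
  rw [TensorProduct.add_tmul]
  rfl

theorem Bal.tmul_add (m : M) (n n' : N) :
    Bal.tmul R m (n + n') = Bal.tmul R m n + Bal.tmul R m n' := by
  show Submodule.Quotient.mk _ = _
  rw [TensorProduct.tmul_add]
  rfl

theorem Bal.zero_tmul (n : N) : Bal.tmul R (0 : M) n = 0 := by
  show Submodule.Quotient.mk _ = _
  rw [TensorProduct.zero_tmul]
  rfl

theorem Bal.tmul_zero (m : M) : Bal.tmul R m (0 : N) = 0 := by
  show Submodule.Quotient.mk _ = _
  rw [TensorProduct.tmul_zero]
  rfl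

/-- The fundamental balancing relation `(m · r) ⊗ n = m ⊗ (r · n)`. -/
theorem Bal.op_smul_tmul (m : M) (r : R) (n : N) :
    Bal.tmul R (op r • m) n = Bal.tmul R m (r • n) :=
  (Submodule.Quotient.eq _).2 (Submodule.subset_span ⟨m, r, n, rfl⟩)

theorem Bal.induction_on {C : Bal R M N → Prop} (x : Bal R M N) (zero : C 0)
    (tmul : ∀ m n, C (Bal.tmul R m n)) (add : ∀ x y, C x → C y → C (x + y)) : C x := by
  obtain ⟨y, rfl⟩ := Submodule.Quotient.mk_surjective _ x
  induction y using TensorProduct.induction_on with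
  | zero => exact zero
  | tmul m n => exact tmul m n
  | add a b ha hb =>
      have : (Submodule.Quotient.mk (a + b) : Bal R M N)
          = Submodule.Quotient.mk a + Submodule.Quotient.mk b := rfl
      rw [this]; exact add _ _ ha hb

/-- Lift a balanced biadditive map to the balanced tensor product. -/
noncomputable def Bal.liftFun {T : Type*} [AddCommGroup T] (f : M → N → T)
    (h1 : ∀ m m' n, f (m + m') n = f m n + f m' n)
    (h2 : ∀ m n n', f m (n + n') = f m n + f m n')
    (h3 : ∀ (m : M) (r : R) (n : N), f (op r • m) n = f m (r • n)) : Bal R M N →+ T :=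
  letI f₂ : M →+ N →+ T :=
    AddMonoidHom.mk' (fun m => AddMonoidHom.mk' (f m) (h2 m))
      (fun m m' => AddMonoidHom.ext fun n => h1 m m' n)
  letI bil : M →ₗ[ℤ] N →ₗ[ℤ] T :=
    { toFun := fun m => (f₂ m).toIntLinearMap
      map_add' := fun m m' => LinearMap.ext fun n => by simp
      map_smul' := fun z m => LinearMap.ext fun n => by
        simp [map_zsmul] }
  ((balRel R M N).liftQ (TensorProduct.lift bil) (by
    rw [balRel, Submodule.span_le]
    rintro x ⟨m, r, n, rfl⟩
    simp only [SetLike.mem_coe]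
    show TensorProduct.lift bil ((op r • m) ⊗ₜ[ℤ] n - m ⊗ₜ[ℤ] (r • n)) = 0
    rw [map_sub]
    simp [bil, f₂, h3 m r n])).toAddMonoidHom

@[simp] theorem Bal.liftFun_tmul {T : Type*} [AddCommGroup T] (f : M → N → T)
    (h1 : ∀ m m' n, f (m + m') n = f m n + f m' n)
    (h2 : ∀ m n n', f m (n + n') = f m n + f m n')
    (h3 : ∀ (m : M) (r : R) (n : N), f (op r • m) n = f m (r • n)) (m : M) (n : N) :
    Bal.liftFun R f h1 h2 h3 (Bal.tmul R m n) = f m n := by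
  simp [Bal.liftFun, Bal.tmul, Submodule.Quotient.mk]
  rfl

theorem Bal.addHom_ext {T : Type*} [AddCommGroup T] {f g : Bal R M N →+ T}
    (h : ∀ m n, f (Bal.tmul R m n) = g (Bal.tmul R m n)) : f = g := by
  ext x
  refine Bal.induction_on R (C := fun z => f z = g z) x (by simp) h
    (fun x y hx hy => by simp only [map_add]; rw [hx, hy])

end BalCore
section BalModule

variable (R : Type*) [Ring R] {M : Type*} [AddCommGroup M] [Module Rᵐᵒᵖ M]
  {N : Type*} [AddCommGroup N] [Module R N]

section Left

variable {S : Type*} [Ring S] [Module S M] [SMulCommClass S Rᵐᵒᵖ M]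

/-- The left action on the balanced tensor product through the first factor. -/
noncomputable def Bal.lsmulHom (s : S) : Bal R M N →+ Bal R M N :=
  Bal.liftFun R (fun m n => Bal.tmul R (s • m) n)
    (fun m m' n => by
      show Bal.tmul R (s • (m + m')) n = Bal.tmul R (s • m) n + Bal.tmul R (s • m') n
      rw [smul_add, Bal.add_tmul])
    (fun m n n' => Bal.tmul_add R _ n n')
    (fun m r n => by
      show Bal.tmul R (s • op r • m) n = Bal.tmul R (s • m) (r • n)
      rw [smul_comm, Bal.op_smul_tmul])

theorem Bal.lsmulHom_tmul (s : S) (m : M) (n : N) :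
    Bal.lsmulHom R (M := M) (N := N) s (Bal.tmul R m n) = Bal.tmul R (s • m) n :=
  Bal.liftFun_tmul R _ _ _ _ m n

noncomputable instance : SMul S (Bal R M N) := ⟨fun s x => Bal.lsmulHom R s x⟩

theorem Bal.lsmul_tmul (s : S) (m : M) (n : N) :
    s • Bal.tmul R m n = Bal.tmul R (s • m) n :=
  Bal.lsmulHom_tmul R s m n

theorem Bal.lsmul_one : Bal.lsmulHom R (M := M) (N := N) (1 : S) = AddMonoidHom.id _ :=
  Bal.addHom_ext R fun m n => by
    rw [Bal.lsmulHom_tmul, one_smul, AddMonoidHom.id_apply]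

theorem Bal.lsmul_mul (s t : S) :
    Bal.lsmulHom R (M := M) (N := N) (s * t) = (Bal.lsmulHom R s).comp (Bal.lsmulHom R t) :=
  Bal.addHom_ext R fun m n => by
    rw [AddMonoidHom.comp_apply, Bal.lsmulHom_tmul, Bal.lsmulHom_tmul, Bal.lsmulHom_tmul,
      mul_smul]

theorem Bal.lsmul_addsmul (s t : S) :
    Bal.lsmulHom R (M := M) (N := N) (s + t) = Bal.lsmulHom R s + Bal.lsmulHom R t :=
  Bal.addHom_ext R fun m n => by
    rw [AddMonoidHom.add_apply, Bal.lsmulHom_tmul, Bal.lsmulHom_tmul, Bal.lsmulHom_tmul,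
      add_smul, Bal.add_tmul]

theorem Bal.lsmul_zerosmul : Bal.lsmulHom R (M := M) (N := N) (0 : S) = 0 :=
  Bal.addHom_ext R fun m n => by
    rw [Bal.lsmulHom_tmul, zero_smul, Bal.zero_tmul, AddMonoidHom.zero_apply]

noncomputable instance : Module S (Bal R M N) where
  one_smul x := DFunLike.congr_fun (Bal.lsmul_one R (M := M) (N := N) (S := S)) x
  mul_smul s t x := DFunLike.congr_fun (Bal.lsmul_mul R s t) x
  smul_zero s := (Bal.lsmulHom R (M := M) (N := N) s).map_zero
  smul_add s x y := (Bal.lsmulHom R s).map_add x y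
  add_smul s t x := DFunLike.congr_fun (Bal.lsmul_addsmul R s t) x
  zero_smul x := DFunLike.congr_fun (Bal.lsmul_zerosmul R (M := M) (N := N) (S := S)) x

end Left

section Right

variable {S : Type*} [Ring S] [Module Sᵐᵒᵖ N] [SMulCommClass R Sᵐᵒᵖ N]

/-- The right action on the balanced tensor product through the second factor. -/
noncomputable def Bal.rsmulHom (s : Sᵐᵒᵖ) : Bal R M N →+ Bal R M N :=
  Bal.liftFun R (fun m n => Bal.tmul R m (s • n))
    (fun m m' n => Bal.add_tmul R m m' _)
    (fun m n n' => by
      show Bal.tmul R m (s • (n + n')) = Bal.tmul R m (s • n) + Bal.tmul R m (s • n')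
      rw [smul_add, Bal.tmul_add])
    (fun m r n => by
      show Bal.tmul R (op r • m) (s • n) = Bal.tmul R m (s • r • n)
      rw [Bal.op_smul_tmul, smul_comm])

theorem Bal.rsmulHom_tmul (s : Sᵐᵒᵖ) (m : M) (n : N) :
    Bal.rsmulHom R (M := M) (N := N) s (Bal.tmul R m n) = Bal.tmul R m (s • n) :=
  Bal.liftFun_tmul R _ _ _ _ m n

noncomputable instance : SMul Sᵐᵒᵖ (Bal R M N) := ⟨fun s x => Bal.rsmulHom R s x⟩

theorem Bal.rsmul_tmul (s : Sᵐᵒᵖ) (m : M) (n : N) :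
    s • Bal.tmul R m n = Bal.tmul R m (s • n) :=
  Bal.rsmulHom_tmul R s m n

theorem Bal.rsmul_one : Bal.rsmulHom R (M := M) (N := N) (1 : Sᵐᵒᵖ) = AddMonoidHom.id _ :=
  Bal.addHom_ext R fun m n => by
    rw [Bal.rsmulHom_tmul, one_smul, AddMonoidHom.id_apply]

theorem Bal.rsmul_mul (s t : Sᵐᵒᵖ) :
    Bal.rsmulHom R (M := M) (N := N) (s * t) = (Bal.rsmulHom R s).comp (Bal.rsmulHom R t) :=
  Bal.addHom_ext R fun m n => by
    rw [AddMonoidHom.comp_apply, Bal.rsmulHom_tmul, Bal.rsmulHom_tmul, Bal.rsmulHom_tmul,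
      mul_smul]

theorem Bal.rsmul_addsmul (s t : Sᵐᵒᵖ) :
    Bal.rsmulHom R (M := M) (N := N) (s + t) = Bal.rsmulHom R s + Bal.rsmulHom R t :=
  Bal.addHom_ext R fun m n => by
    rw [AddMonoidHom.add_apply, Bal.rsmulHom_tmul, Bal.rsmulHom_tmul, Bal.rsmulHom_tmul,
      add_smul, Bal.tmul_add]

theorem Bal.rsmul_zerosmul : Bal.rsmulHom R (M := M) (N := N) (0 : Sᵐᵒᵖ) = 0 :=
  Bal.addHom_ext R fun m n => by
    rw [Bal.rsmulHom_tmul, zero_smul, Bal.tmul_zero, AddMonoidHom.zero_apply]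

noncomputable instance : Module Sᵐᵒᵖ (Bal R M N) where
  one_smul x := DFunLike.congr_fun (Bal.rsmul_one R (M := M) (N := N) (S := S)) x
  mul_smul s t x := DFunLike.congr_fun (Bal.rsmul_mul R s t) x
  smul_zero s := (Bal.rsmulHom R (M := M) (N := N) s).map_zero
  smul_add s x y := (Bal.rsmulHom R s).map_add x y
  add_smul s t x := DFunLike.congr_fun (Bal.rsmul_addsmul R s t) x
  zero_smul x := DFunLike.congr_fun (Bal.rsmul_zerosmul R (M := M) (N := N) (S := S)) x

end Right

end BalModule

universe u

/-! Replace `Q` by the dual `Q' = Hom_A(P, A)`. Evaluation `P ⊗_B Q' → A` is split because `ν`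
factors through it via the bimodule map `Q → Q'`, `q ↦ ν (- ⊗ q)`. Since `A` and `B` are
symmetric, composing with their traces identifies `Hom_{Bᵒᵖ}(P, B) ≅ Hom_k(P, k) ≅ Q'` as
`B`-`A`-bimodules; evaluation of `Hom_{Bᵒᵖ}(P, B)` then gives a pairing `Q' ⊗_A P → B`, through
which `μ` factors in the same way. Dual bases of `P` over `A` and over `Bᵒᵖ` provide the
adjunction elements and show that `Q'` is finitely generated projective on both sides. -/

namespace Bal

variable {R : Type*} [Ring R] {M M' : Type*} [AddCommGroup M] [Module Rᵐᵒᵖ M]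
  [AddCommGroup M'] [Module Rᵐᵒᵖ M'] {N N' : Type*} [AddCommGroup N] [Module R N]
  [AddCommGroup N'] [Module R N']

noncomputable def map (f : M →ₗ[Rᵐᵒᵖ] M') (g : N →ₗ[R] N') : Bal R M N →+ Bal R M' N' :=
  Bal.liftFun R (fun m n => Bal.tmul R (f m) (g n))
    (fun m m' n => by rw [map_add, Bal.add_tmul])
    (fun m n n' => by rw [map_add, Bal.tmul_add])
    (fun m r n => by rw [f.map_smul, g.map_smul, Bal.op_smul_tmul])

theorem map_tmul (f : M →ₗ[Rᵐᵒᵖ] M') (g : N →ₗ[R] N') (m : M) (n : N) :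
    map f g (Bal.tmul R m n) = Bal.tmul R (f m) (g n) :=
  Bal.liftFun_tmul R _ _ _ _ m n

theorem map_smul {S : Type*} [Ring S] [Module S M] [SMulCommClass S Rᵐᵒᵖ M] [Module S M']
    [SMulCommClass S Rᵐᵒᵖ M'] {f : M →ₗ[Rᵐᵒᵖ] M'} (hf : ∀ (s : S) m, f (s • m) = s • f m)
    (g : N →ₗ[R] N') (s : S) (x : Bal R M N) : map f g (s • x) = s • map f g x := by
  induction x using Bal.induction_on with
  | zero => rw [smul_zero, map_zero, smul_zero]
  | tmul m n => rw [Bal.lsmul_tmul, map_tmul, map_tmul, hf, Bal.lsmul_tmul]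
  | add x y hx hy => rw [smul_add, map_add, map_add, hx, hy, smul_add]

theorem map_op_smul {S : Type*} [Ring S] [Module Sᵐᵒᵖ N] [SMulCommClass R Sᵐᵒᵖ N]
    [Module Sᵐᵒᵖ N'] [SMulCommClass R Sᵐᵒᵖ N'] (f : M →ₗ[Rᵐᵒᵖ] M') {g : N →ₗ[R] N'}
    (hg : ∀ (s : S) n, g (op s • n) = op s • g n) (s : S) (x : Bal R M N) :
    map f g (op s • x) = op s • map f g x := by
  induction x using Bal.induction_on with
  | zero => rw [smul_zero, map_zero, smul_zero]
  | tmul m n => rw [Bal.rsmul_tmul, map_tmul, map_tmul, hg, Bal.rsmul_tmul]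
  | add x y hx hy => rw [smul_add, map_add, map_add, hx, hy, smul_add]

end Bal

section BimoduleSection

variable {A X X' : Type*} [Ring A] [AddCommGroup X] [SMul A X] [SMul Aᵐᵒᵖ X]
  [AddCommGroup X'] [SMul A X'] [SMul Aᵐᵒᵖ X']

def IsBimoduleSection (ν : X →+ A) (σ : A →+ X) : Prop :=
  (∀ a c : A, σ (a * c) = a • σ c) ∧ (∀ a c : A, σ (c * a) = op a • σ c) ∧ ∀ a, ν (σ a) = a

variable {ν : X →+ A} {σ : A →+ X}

theorem IsBimoduleSection.surjective (h : IsBimoduleSection ν σ) : Function.Surjective ν :=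
  fun a => ⟨σ a, h.2.2 a⟩

theorem IsBimoduleSection.map (h : IsBimoduleSection ν σ) {F : X →+ X'}
    (hFl : ∀ (a : A) x, F (a • x) = a • F x) (hFr : ∀ (a : A) x, F (op a • x) = op a • F x)
    {ν' : X' →+ A} (hν' : ∀ x, ν' (F x) = ν x) : IsBimoduleSection ν' (F.comp σ) :=
  ⟨fun a c => by simp [h.1, hFl], fun a c => by simp [h.2.1, hFr], fun a => by simp [hν', h.2.2]⟩

end BimoduleSection

namespace Module

variable {R M : Type*} [Ring R] [AddCommGroup M] [Module R M]

theorem exists_dualBasis [Module.Finite R M] [Module.Projective R M] :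
    ∃ (n : ℕ) (x : Fin n → M) (f : Fin n → M →ₗ[R] R), ∀ m, ∑ i, f i m • x i = m := by
  obtain ⟨n, s, r, -, -, hsr⟩ := Module.Finite.exists_comp_eq_id_of_projective R M
  refine ⟨n, fun i => s (Pi.single i 1), fun i => LinearMap.proj i ∘ₗ r, fun m => ?_⟩
  conv_rhs => rw [← LinearMap.id_apply (R := R) m, ← hsr, LinearMap.comp_apply,
    LinearMap.pi_apply_eq_sum_univ s]
  congr! 3 with i
  ext j
  simp [Pi.single_apply, eq_comm]

variable {n : ℕ} {x : Fin n → M} {f : Fin n → M →ₗ[R] R}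

theorem Finite.of_dualBasis (hxf : ∀ m, ∑ i, f i m • x i = m) : Module.Finite R M :=
  Module.Finite.of_surjective (Fintype.linearCombination R x)
    fun m => ⟨fun i => f i m, hxf m⟩

theorem Projective.of_dualBasis (hxf : ∀ m, ∑ i, f i m • x i = m) : Module.Projective R M :=
  .of_split (LinearMap.pi f) (Fintype.linearCombination R x) (LinearMap.ext hxf)

theorem sum_op_apply_smul_dualBasis (hxf : ∀ m, ∑ i, f i m • x i = m) (g : M →ₗ[R] R) :
    ∑ i, op (g (x i)) • f i = g := by
  ext m
  conv_rhs => rw [← hxf m, map_sum]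
  simp

def evalOp (m : M) : (M →ₗ[R] R) →ₗ[Rᵐᵒᵖ] Rᵐᵒᵖ where
  toFun g := op (g m)
  map_add' g g' := by simp
  map_smul' r g := by simp

instance Finite.homSelf [Module.Finite R M] [Module.Projective R M] :
    Module.Finite Rᵐᵒᵖ (M →ₗ[R] R) :=
  have ⟨_, x, _, hxf⟩ := exists_dualBasis (R := R) (M := M)
  .of_dualBasis (f := fun i => evalOp (x i)) (sum_op_apply_smul_dualBasis hxf)

instance Projective.homSelf [Module.Finite R M] [Module.Projective R M] :
    Module.Projective Rᵐᵒᵖ (M →ₗ[R] R) :=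
  have ⟨_, x, _, hxf⟩ := exists_dualBasis (R := R) (M := M)
  .of_dualBasis (f := fun i => evalOp (x i)) (sum_op_apply_smul_dualBasis hxf)

end Module

section SymmetricForm

variable {k R : Type*} [CommRing k] [Ring R] [Algebra k R]

def IsSymmetricForm (φ : R →ₗ[k] Module.Dual k R) : Prop :=
  Function.Bijective φ ∧ (∀ a x y : R, φ (a * x) y = φ x (y * a)) ∧
    (∀ a x y : R, φ (x * a) y = φ x (a * y))

def opForm (φ : R →ₗ[k] Module.Dual k R) : Rᵐᵒᵖ →ₗ[k] Module.Dual k Rᵐᵒᵖ :=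
  (opLinearEquiv k : R ≃ₗ[k] Rᵐᵒᵖ).symm.toLinearMap.dualMap ∘ₗ φ ∘ₗ
    (opLinearEquiv k).symm.toLinearMap

theorem opForm_apply (φ : R →ₗ[k] Module.Dual k R) (x y : Rᵐᵒᵖ) :
    opForm φ x y = φ (unop x) (unop y) := rfl

namespace IsSymmetricForm

variable {φ : R →ₗ[k] Module.Dual k R} (hφ : IsSymmetricForm φ)
include hφ

theorem apply_eq_one_apply (x y : R) : φ x y = φ 1 (y * x) := by
  simpa using hφ.2.1 x 1 y

theorem one_apply_mul_comm (x y : R) : φ 1 (x * y) = φ 1 (y * x) := by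
  rw [← hφ.apply_eq_one_apply, ← hφ.2.2, one_mul]

theorem mulOpposite : IsSymmetricForm (opForm φ) := by
  refine ⟨?_, fun a x y => ?_, fun a x y => ?_⟩
  · exact ((opLinearEquiv k : R ≃ₗ[k] Rᵐᵒᵖ).symm.dualMap.bijective).comp
      (hφ.1.comp (opLinearEquiv k).symm.bijective)
  · simp only [opForm_apply, unop_mul, hφ.2.2]
  · simp only [opForm_apply, unop_mul, hφ.2.1]

end IsSymmetricForm

end SymmetricForm

namespace IsSymmetricForm

variable {k R P : Type*} [CommRing k] [Ring R] [Algebra k R] [AddCommGroup P] [Module R P]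
  [Module k P] [IsScalarTower k R P] {φ : R →ₗ[k] Module.Dual k R} (hφ : IsSymmetricForm φ)

noncomputable def homOfDual (f : Module.Dual k P) : P →ₗ[R] R where
  toFun p := (LinearEquiv.ofBijective φ hφ.1).symm
    (f ∘ₗ (LinearMap.toSpanSingleton R P p).restrictScalars k)
  map_add' p q := hφ.1.1 <| LinearMap.ext fun r => by simp
  map_smul' a p := hφ.1.1 <| LinearMap.ext fun r => by simp [hφ.2.1, mul_smul]

theorem apply_homOfDual_apply (f : Module.Dual k P) (p : P) (r : R) :
    φ (hφ.homOfDual f p) r = f (r • p) := by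
  simp [homOfDual]

noncomputable def homEquivDual : (P →ₗ[R] R) ≃ₗ[k] Module.Dual k P where
  toFun g := φ 1 ∘ₗ g.restrictScalars k
  map_add' g g' := by ext; simp
  map_smul' c g := by ext; simp
  invFun := hφ.homOfDual
  left_inv g := LinearMap.ext fun p => hφ.1.1 <| LinearMap.ext fun r => by
    rw [apply_homOfDual_apply, hφ.apply_eq_one_apply (g p)]
    simp
  right_inv f := LinearMap.ext fun p =>
    calc φ 1 (hφ.homOfDual f p) = φ (hφ.homOfDual f p) 1 := by
          rw [hφ.apply_eq_one_apply _ 1, one_mul]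
      _ = f p := by rw [apply_homOfDual_apply, one_smul]

theorem homEquivDual_apply (g : P →ₗ[R] R) (p : P) : hφ.homEquivDual g p = φ 1 (g p) := rfl

theorem homEquivDual_op_smul (r : R) (g : P →ₗ[R] R) (p : P) :
    hφ.homEquivDual (op r • g) p = hφ.homEquivDual g (r • p) := by
  simp [homEquivDual_apply, hφ.one_apply_mul_comm]

theorem homEquivDual_symm_comp {f f' : Module.Dual k P} (ρ : P →ₗ[R] P)
    (h : ∀ p, f' p = f (ρ p)) : hφ.homEquivDual.symm f' = hφ.homEquivDual.symm f ∘ₗ ρ := by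
  rw [LinearEquiv.symm_apply_eq]
  ext p
  change f' p = hφ.homEquivDual (hφ.homEquivDual.symm f) (ρ p)
  rw [LinearEquiv.apply_symm_apply, h]

theorem homEquivDual_symm_op_smul {f f' : Module.Dual k P} (r : R)
    (h : ∀ p, f' p = f (r • p)) : hφ.homEquivDual.symm f' = op r • hφ.homEquivDual.symm f := by
  rw [LinearEquiv.symm_apply_eq]
  ext p
  rw [h, homEquivDual_op_smul, LinearEquiv.apply_symm_apply]

end IsSymmetricForm

section DualBimodule

variable {A B P : Type*} [Ring A] [Ring B] [AddCommGroup P] [Module A P] [Module Bᵐᵒᵖ P]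
  [SMulCommClass A Bᵐᵒᵖ P]

noncomputable instance LinearMap.moduleOpDomain : Module B (P →ₗ[A] A) :=
  Module.compHom (R := (Bᵐᵒᵖ)ᵈᵐᵃ) _ (RingEquiv.opOp B).toRingHom

theorem LinearMap.smul_apply_op (b : B) (g : P →ₗ[A] A) (p : P) : (b • g) p = g (op b • p) :=
  rfl

instance LinearMap.smulCommClassOpDomain : SMulCommClass B Aᵐᵒᵖ (P →ₗ[A] A) :=
  ⟨fun _ _ _ => rfl⟩

instance LinearMap.isScalarTowerOpDomain {k : Type*} [CommRing k] [Algebra k A] [Algebra k B]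
    [Module k P] [IsScalarTower k A P] [IsScalarTower k Bᵐᵒᵖ P] :
    IsScalarTower k B (P →ₗ[A] A) where
  smul_assoc c b g := LinearMap.ext fun p => by
    simp [LinearMap.smul_apply_op]

end DualBimodule

section Evaluation

variable {A B P Q : Type*} [Ring A] [Ring B] [AddCommGroup P] [Module A P] [Module Bᵐᵒᵖ P]
  [SMulCommClass A Bᵐᵒᵖ P]

noncomputable def homEval : Bal B P (P →ₗ[A] A) →+ A :=
  Bal.liftFun B (fun p g => g p) (fun p p' g => map_add g p p') (fun _ _ _ => rfl)
    (fun _ _ _ => rfl)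

theorem homEval_tmul (p : P) (g : P →ₗ[A] A) : homEval (Bal.tmul B p g) = g p :=
  Bal.liftFun_tmul B _ _ _ _ p g

theorem homEval_smul (a : A) (x : Bal B P (P →ₗ[A] A)) : homEval (a • x) = a * homEval x := by
  induction x using Bal.induction_on with
  | zero => rw [smul_zero, map_zero, mul_zero]
  | tmul p g => rw [Bal.lsmul_tmul, homEval_tmul, homEval_tmul, map_smul, smul_eq_mul]
  | add x y hx hy => rw [smul_add, map_add, map_add, hx, hy, mul_add]

theorem homEval_op_smul (a : A) (x : Bal B P (P →ₗ[A] A)) :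
    homEval (op a • x) = homEval x * a := by
  induction x using Bal.induction_on with
  | zero => rw [smul_zero, map_zero, zero_mul]
  | tmul p g => rw [Bal.rsmul_tmul, homEval_tmul, homEval_tmul]; rfl
  | add x y hx hy => rw [smul_add, map_add, map_add, hx, hy, add_mul]

variable [AddCommGroup Q] [Module B Q]
  (ν : Bal B P Q →+ A) (hνl : ∀ (a : A) x, ν (a • x) = a * ν x)

noncomputable def curryLeft : Q →ₗ[B] (P →ₗ[A] A) where
  toFun q :=
    { toFun p := ν (Bal.tmul B p q)
      map_add' p p' := by rw [Bal.add_tmul, map_add]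
      map_smul' a p := by rw [← Bal.lsmul_tmul, hνl, smul_eq_mul, RingHom.id_apply] }
  map_add' q q' := LinearMap.ext fun p => by simp [Bal.tmul_add]
  map_smul' b q := LinearMap.ext fun p => by
    simp [LinearMap.smul_apply_op, Bal.op_smul_tmul]

theorem curryLeft_apply (q : Q) (p : P) : curryLeft ν hνl q p = ν (Bal.tmul B p q) := rfl

theorem curryLeft_op_smul [Module Aᵐᵒᵖ Q] [SMulCommClass B Aᵐᵒᵖ Q]
    (hνr : ∀ (a : A) x, ν (op a • x) = ν x * a) (a : A) (q : Q) :
    curryLeft ν hνl (op a • q) = op a • curryLeft ν hνl q :=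
  LinearMap.ext fun p => by
    rw [curryLeft_apply, ← Bal.rsmul_tmul, hνr]
    rfl

theorem homEval_map_curryLeft (x : Bal B P Q) :
    homEval (Bal.map LinearMap.id (curryLeft ν hνl) x) = ν x := by
  induction x using Bal.induction_on with
  | zero => rw [map_zero, map_zero, map_zero]
  | tmul p q => rw [Bal.map_tmul, homEval_tmul, curryLeft_apply, LinearMap.id_apply]
  | add x y hx hy => rw [map_add, map_add, map_add, hx, hy]

end Evaluation

section SymmetricDual

variable {k A B P : Type*} [CommRing k] [Ring A] [Algebra k A] [Ring B] [Algebra k B]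
  [AddCommGroup P] [Module A P] [Module Bᵐᵒᵖ P] [SMulCommClass A Bᵐᵒᵖ P] [Module k P]
  [IsScalarTower k A P] [IsScalarTower k Bᵐᵒᵖ P]
  {φ : A →ₗ[k] Module.Dual k A} {ψ : B →ₗ[k] Module.Dual k B}
  (hφ : IsSymmetricForm φ) (hψ : IsSymmetricForm ψ)

noncomputable def dualEquiv : (P →ₗ[Bᵐᵒᵖ] Bᵐᵒᵖ) ≃ₗ[k] (P →ₗ[A] A) :=
  hψ.mulOpposite.homEquivDual.trans hφ.homEquivDual.symm

theorem dualEquiv_comp_smul (a : A) (h : P →ₗ[Bᵐᵒᵖ] Bᵐᵒᵖ) :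
    dualEquiv hφ hψ (h ∘ₗ DistribSMul.toLinearMap Bᵐᵒᵖ P a) =
      op a • dualEquiv hφ hψ h :=
  hφ.homEquivDual_symm_op_smul a fun _ => rfl

theorem dualEquiv_op_op_smul (b : B) (h : P →ₗ[Bᵐᵒᵖ] Bᵐᵒᵖ) :
    dualEquiv hφ hψ (op (op b) • h) = b • dualEquiv hφ hψ h :=
  haveI := SMulCommClass.symm A Bᵐᵒᵖ P
  hφ.homEquivDual_symm_comp (DistribSMul.toLinearMap A P (op b))
    (hψ.mulOpposite.homEquivDual_op_smul (op b) h)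

theorem dualEquiv_symm_op_smul (a : A) (g : P →ₗ[A] A) :
    (dualEquiv hφ hψ).symm (op a • g) =
      (dualEquiv hφ hψ).symm g ∘ₗ DistribSMul.toLinearMap Bᵐᵒᵖ P a := by
  rw [LinearEquiv.symm_apply_eq, dualEquiv_comp_smul, LinearEquiv.apply_symm_apply]

theorem dualEquiv_symm_smul (b : B) (g : P →ₗ[A] A) :
    (dualEquiv hφ hψ).symm (b • g) = op (op b) • (dualEquiv hφ hψ).symm g := by
  rw [LinearEquiv.symm_apply_eq, dualEquiv_op_op_smul, LinearEquiv.apply_symm_apply]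

noncomputable def dualEval : Bal A (P →ₗ[A] A) P →+ B :=
  Bal.liftFun A (fun g p => unop ((dualEquiv hφ hψ).symm g p))
    (fun g g' p => by rw [map_add, LinearMap.add_apply, unop_add])
    (fun g p p' => by rw [map_add, unop_add])
    (fun g a p => by rw [dualEquiv_symm_op_smul]; rfl)

theorem dualEval_tmul (g : P →ₗ[A] A) (p : P) :
    dualEval hφ hψ (Bal.tmul A g p) = unop ((dualEquiv hφ hψ).symm g p) :=
  Bal.liftFun_tmul A _ _ _ _ g p

theorem dualEval_tmul_dualEquiv (h : P →ₗ[Bᵐᵒᵖ] Bᵐᵒᵖ) (p : P) :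
    dualEval hφ hψ (Bal.tmul A (dualEquiv hφ hψ h) p) = unop (h p) := by
  rw [dualEval_tmul, LinearEquiv.symm_apply_apply]

theorem dualEval_smul (b : B) (y : Bal A (P →ₗ[A] A) P) :
    dualEval hφ hψ (b • y) = b * dualEval hφ hψ y := by
  induction y using Bal.induction_on with
  | zero => rw [smul_zero, map_zero, mul_zero]
  | tmul g p => rw [Bal.lsmul_tmul, dualEval_tmul, dualEval_tmul, dualEquiv_symm_smul]; rfl
  | add x y hx hy => rw [smul_add, map_add, map_add, hx, hy, mul_add]

theorem dualEval_op_smul (b : B) (y : Bal A (P →ₗ[A] A) P) :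
    dualEval hφ hψ (op b • y) = dualEval hφ hψ y * b := by
  induction y using Bal.induction_on with
  | zero => rw [smul_zero, map_zero, zero_mul]
  | tmul g p => rw [Bal.rsmul_tmul, dualEval_tmul, dualEval_tmul, map_smul]; rfl
  | add x y hx hy => rw [smul_add, map_add, map_add, hx, hy, add_mul]

noncomputable def dualEvalAt (p : P) : (P →ₗ[A] A) →ₗ[B] B where
  toFun g := dualEval hφ hψ (Bal.tmul A g p)
  map_add' g g' := by rw [Bal.add_tmul, map_add]
  map_smul' b g := by rw [← Bal.lsmul_tmul, dualEval_smul, smul_eq_mul, RingHom.id_apply]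

theorem dualEvalAt_apply (p : P) (g : P →ₗ[A] A) :
    dualEvalAt hφ hψ p g = dualEval hφ hψ (Bal.tmul A g p) := rfl

theorem sum_dualEvalAt_smul_dualEquiv {m : ℕ} {y : Fin m → P}
    {h : Fin m → P →ₗ[Bᵐᵒᵖ] Bᵐᵒᵖ} (hyh : ∀ p, ∑ j, h j p • y j = p) (g : P →ₗ[A] A) :
    ∑ j, dualEvalAt hφ hψ (y j) g • dualEquiv hφ hψ (h j) = g := by
  set g₀ := (dualEquiv hφ hψ).symm g
  calc ∑ j, dualEvalAt hφ hψ (y j) g • dualEquiv hφ hψ (h j)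
      = ∑ j, dualEquiv hφ hψ (op (g₀ (y j)) • h j) := by
        simp only [dualEvalAt_apply, dualEval_tmul, ← dualEquiv_op_op_smul]
        rfl
    _ = g := by
        rw [← map_sum, Module.sum_op_apply_smul_dualBasis hyh, LinearEquiv.apply_symm_apply]

theorem sum_op_dualEval_dualEquiv_smul {m : ℕ} {y : Fin m → P}
    {h : Fin m → P →ₗ[Bᵐᵒᵖ] Bᵐᵒᵖ} (hyh : ∀ p, ∑ j, h j p • y j = p) (p : P) :
    ∑ j, op (dualEval hφ hψ (Bal.tmul A (dualEquiv hφ hψ (h j)) p)) • y j = p := by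
  simpa only [dualEval_tmul_dualEquiv, op_unop] using hyh p

variable {Q : Type*} [AddCommGroup Q] [Module Aᵐᵒᵖ Q]
  (μ : Bal A Q P →+ B) (hμr : ∀ (b : B) y, μ (op b • y) = μ y * b)

noncomputable def curryRightOp (q : Q) : P →ₗ[Bᵐᵒᵖ] Bᵐᵒᵖ where
  toFun p := op (μ (Bal.tmul A q p))
  map_add' p p' := by rw [Bal.tmul_add, map_add, op_add]
  map_smul' b p := by
    rw [← Bal.rsmul_tmul, ← op_unop b, hμr, op_mul, smul_eq_mul, RingHom.id_apply]

theorem curryRightOp_apply (q : Q) (p : P) :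
    curryRightOp μ hμr q p = op (μ (Bal.tmul A q p)) := rfl

noncomputable def curryRight : Q →ₗ[Aᵐᵒᵖ] (P →ₗ[A] A) where
  toFun q := dualEquiv hφ hψ (curryRightOp μ hμr q)
  map_add' q q' := by
    rw [← map_add]
    congr 1
    ext p
    simp [curryRightOp, Bal.add_tmul]
  map_smul' := MulOpposite.rec' fun a q => by
    rw [RingHom.id_apply, ← dualEquiv_comp_smul]
    congr 1
    ext p
    simp [curryRightOp, Bal.op_smul_tmul]

theorem curryRight_apply (q : Q) :
    curryRight hφ hψ μ hμr q = dualEquiv hφ hψ (curryRightOp μ hμr q) := rfl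

theorem curryRight_smul [Module B Q] [SMulCommClass B Aᵐᵒᵖ Q]
    (hμl : ∀ (b : B) y, μ (b • y) = b * μ y) (b : B) (q : Q) :
    curryRight hφ hψ μ hμr (b • q) = b • curryRight hφ hψ μ hμr q := by
  rw [curryRight_apply, curryRight_apply, ← dualEquiv_op_op_smul]
  congr 1
  ext p
  simp [curryRightOp, ← Bal.lsmul_tmul, hμl]

theorem dualEval_map_curryRight (y : Bal A Q P) :
    dualEval hφ hψ (Bal.map (curryRight hφ hψ μ hμr) LinearMap.id y) = μ y := by
  induction y using Bal.induction_on with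
  | zero => rw [map_zero, map_zero, map_zero]
  | tmul q p => rw [Bal.map_tmul, LinearMap.id_apply, curryRight_apply,
      dualEval_tmul_dualEquiv, curryRightOp_apply, unop_op]
  | add x y hx hy => rw [map_add, map_add, map_add, hx, hy]

end SymmetricDual

theorem separable_equivalence_of_symmetric_algebras_is_symmetric_general
    {k : Type*} {A B P Q : Type u} [Field k] [Ring A] [Algebra k A] [Ring B] [Algebra k B]
    -- `A` and `B` are symmetric algebras
    (hA : ∃ φ : A →ₗ[k] Module.Dual k A, Function.Bijective φ ∧
      (∀ a x y : A, φ (a * x) y = φ x (y * a)) ∧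
      (∀ a x y : A, φ (x * a) y = φ x (a * y)))
    (hB : ∃ ψ : B →ₗ[k] Module.Dual k B, Function.Bijective ψ ∧
      (∀ b x y : B, ψ (b * x) y = ψ x (y * b)) ∧
      (∀ b x y : B, ψ (x * b) y = ψ x (b * y)))
    -- a separable equivalence between `A` and `B` via `k`-central context bimodules
    [AddCommGroup P] [Module A P] [Module Bᵐᵒᵖ P] [SMulCommClass A Bᵐᵒᵖ P]
    [Module k P] [IsScalarTower k A P] [IsScalarTower k Bᵐᵒᵖ P]
    [AddCommGroup Q] [Module B Q] [Module Aᵐᵒᵖ Q] [SMulCommClass B Aᵐᵒᵖ Q]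
    [Module.Finite A P] [Module.Projective A P]
    [Module.Finite Bᵐᵒᵖ P] [Module.Projective Bᵐᵒᵖ P]
    (ν : Bal B P Q →+ A)
    (hνl : ∀ (a : A) (x : Bal B P Q), ν (a • x) = a * ν x)
    (hνr : ∀ (a : A) (x : Bal B P Q), ν (op a • x) = ν x * a)
    (hνsplit : ∃ σ : A →+ Bal B P Q,
      (∀ (a c : A), σ (a * c) = a • σ c) ∧ (∀ (a c : A), σ (c * a) = op a • σ c) ∧
      ∀ a : A, ν (σ a) = a)
    (μ : Bal A Q P →+ B)
    (hμl : ∀ (b : B) (y : Bal A Q P), μ (b • y) = b * μ y)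
    (hμr : ∀ (b : B) (y : Bal A Q P), μ (op b • y) = μ y * b)
    (hμsplit : ∃ τ : B →+ Bal A Q P,
      (∀ (b c : B), τ (b * c) = b • τ c) ∧ (∀ (b c : B), τ (c * b) = op b • τ c) ∧
      ∀ b : B, μ (τ b) = b) :
    ∃ (P' : Type u) (_ : AddCommGroup P') (_ : Module A P') (_ : Module Bᵐᵒᵖ P')
      (_ : SMulCommClass A Bᵐᵒᵖ P') (_ : Module k P') (_ : IsScalarTower k A P')
      (_ : IsScalarTower k Bᵐᵒᵖ P')
      (Q' : Type u) (_ : AddCommGroup Q') (_ : Module B Q') (_ : Module Aᵐᵒᵖ Q')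
      (_ : SMulCommClass B Aᵐᵒᵖ Q') (_ : Module k Q') (_ : IsScalarTower k B Q')
      (_ : IsScalarTower k Aᵐᵒᵖ Q'),
      Module.Finite A P' ∧ Module.Projective A P' ∧
      Module.Finite Bᵐᵒᵖ P' ∧ Module.Projective Bᵐᵒᵖ P' ∧
      Module.Finite B Q' ∧ Module.Projective B Q' ∧
      Module.Finite Aᵐᵒᵖ Q' ∧ Module.Projective Aᵐᵒᵖ Q' ∧
      ∃ ν' : Bal B P' Q' →+ A,
        (∀ (a : A) (x : Bal B P' Q'), ν' (a • x) = a * ν' x) ∧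
        (∀ (a : A) (x : Bal B P' Q'), ν' (op a • x) = ν' x * a) ∧
        Function.Surjective ν' ∧
        (∃ σ : A →+ Bal B P' Q',
          (∀ (a c : A), σ (a * c) = a • σ c) ∧ (∀ (a c : A), σ (c * a) = op a • σ c) ∧
          ∀ a : A, ν' (σ a) = a) ∧
        ∃ μ' : Bal A Q' P' →+ B,
          (∀ (b : B) (y : Bal A Q' P'), μ' (b • y) = b * μ' y) ∧
          (∀ (b : B) (y : Bal A Q' P'), μ' (op b • y) = μ' y * b) ∧
          Function.Surjective μ' ∧
          (∃ τ : B →+ Bal A Q' P',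
            (∀ (b c : B), τ (b * c) = b • τ c) ∧ (∀ (b c : B), τ (c * b) = op b • τ c) ∧
            ∀ b : B, μ' (τ b) = b) ∧
          (∃ (n : ℕ) (q' : Fin n → Q') (p' : Fin n → P'),
            (∀ p : P', ∑ i, ν' (Bal.tmul B p (q' i)) • p' i = p) ∧
            (∀ q : Q', ∑ i, op (ν' (Bal.tmul B (p' i) q)) • q' i = q)) ∧
          (∃ (m : ℕ) (pj : Fin m → P') (qj : Fin m → Q'),
            (∀ q : Q', ∑ j, μ' (Bal.tmul A q (pj j)) • qj j = q) ∧
            (∀ p : P', ∑ j, op (μ' (Bal.tmul A (qj j) p)) • pj j = p)) := by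
  obtain ⟨φ, hφ⟩ := hA
  obtain ⟨ψ, hψ⟩ := hB
  obtain ⟨σ, hσ⟩ := hνsplit
  obtain ⟨τ, hτ⟩ := hμsplit
  obtain ⟨n, x, f, hxf⟩ := Module.exists_dualBasis (R := A) (M := P)
  obtain ⟨m, y, h, hyh⟩ := Module.exists_dualBasis (R := Bᵐᵒᵖ) (M := P)
  have hσ' : IsBimoduleSection homEval ((Bal.map LinearMap.id (curryLeft ν hνl)).comp σ) :=
    IsBimoduleSection.map hσ (Bal.map_smul (fun _ _ => rfl) _)
      (Bal.map_op_smul _ (curryLeft_op_smul ν hνl hνr)) (homEval_map_curryLeft ν hνl)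
  have hτ' : IsBimoduleSection (dualEval hφ hψ)
      ((Bal.map (curryRight hφ hψ μ hμr) LinearMap.id).comp τ) :=
    IsBimoduleSection.map hτ (Bal.map_smul (curryRight_smul hφ hψ μ hμr hμl) _)
      (Bal.map_op_smul _ fun _ _ => rfl) (dualEval_map_curryRight hφ hψ μ hμr)
  have hdual := sum_dualEvalAt_smul_dualEquiv hφ hψ hyh
  refine ⟨P, inferInstance, inferInstance, inferInstance, inferInstance, inferInstance,
    inferInstance, inferInstance, P →ₗ[A] A, inferInstance, inferInstance, inferInstance,
    inferInstance, inferInstance, inferInstance, inferInstance, inferInstance, inferInstance,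
    inferInstance, inferInstance, .of_dualBasis hdual, .of_dualBasis hdual, inferInstance,
    inferInstance, homEval, homEval_smul, homEval_op_smul, hσ'.surjective, ⟨_, hσ'⟩,
    dualEval hφ hψ, dualEval_smul hφ hψ, dualEval_op_smul hφ hψ, hτ'.surjective, ⟨_, hτ'⟩,
    ⟨n, f, x, fun p => ?_, Module.sum_op_apply_smul_dualBasis hxf⟩,
    ⟨m, y, fun j => dualEquiv hφ hψ (h j), hdual, sum_op_dualEval_dualEquiv_smul hφ hψ hyh⟩⟩
  simpa only [homEval_tmul] using hxf p

/-- Over a field `k`, a separable equivalence between finite-dimensional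
symmetric `k`-algebras `A` and `B` (via `k`-central context bimodules) is a symmetric
separable equivalence: there is a context `(P', Q', ν', μ')` of left and right finite
projective `k`-central bimodules with `ν'`, `μ'` split bimodule epimorphisms admitting
adjunction elements on both sides. -/
theorem separable_equivalence_of_symmetric_algebras_is_symmetric
    {k : Type*} {A B P Q : Type u} [Field k] [Ring A] [Algebra k A] [Ring B] [Algebra k B]
    [FiniteDimensional k A] [FiniteDimensional k B]
    -- `A` and `B` are symmetric algebras
    (hA : ∃ φ : A →ₗ[k] Module.Dual k A, Function.Bijective φ ∧
      (∀ a x y : A, φ (a * x) y = φ x (y * a)) ∧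
      (∀ a x y : A, φ (x * a) y = φ x (a * y)))
    (hB : ∃ ψ : B →ₗ[k] Module.Dual k B, Function.Bijective ψ ∧
      (∀ b x y : B, ψ (b * x) y = ψ x (y * b)) ∧
      (∀ b x y : B, ψ (x * b) y = ψ x (b * y)))
    -- a separable equivalence between `A` and `B` via `k`-central context bimodules
    [AddCommGroup P] [Module A P] [Module Bᵐᵒᵖ P] [SMulCommClass A Bᵐᵒᵖ P]
    [Module k P] [IsScalarTower k A P] [IsScalarTower k Bᵐᵒᵖ P]
    [AddCommGroup Q] [Module B Q] [Module Aᵐᵒᵖ Q] [SMulCommClass B Aᵐᵒᵖ Q]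
    [Module k Q] [IsScalarTower k B Q] [IsScalarTower k Aᵐᵒᵖ Q]
    [Module.Finite A P] [Module.Projective A P]
    [Module.Finite Bᵐᵒᵖ P] [Module.Projective Bᵐᵒᵖ P]
    [Module.Finite B Q] [Module.Projective B Q]
    [Module.Finite Aᵐᵒᵖ Q] [Module.Projective Aᵐᵒᵖ Q]
    (ν : Bal B P Q →+ A)
    (hνl : ∀ (a : A) (x : Bal B P Q), ν (a • x) = a * ν x)
    (hνr : ∀ (a : A) (x : Bal B P Q), ν (op a • x) = ν x * a)
    (hνsurj : Function.Surjective ν)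
    (hνsplit : ∃ σ : A →+ Bal B P Q,
      (∀ (a c : A), σ (a * c) = a • σ c) ∧ (∀ (a c : A), σ (c * a) = op a • σ c) ∧
      ∀ a : A, ν (σ a) = a)
    (μ : Bal A Q P →+ B)
    (hμl : ∀ (b : B) (y : Bal A Q P), μ (b • y) = b * μ y)
    (hμr : ∀ (b : B) (y : Bal A Q P), μ (op b • y) = μ y * b)
    (hμsurj : Function.Surjective μ)
    (hμsplit : ∃ τ : B →+ Bal A Q P,
      (∀ (b c : B), τ (b * c) = b • τ c) ∧ (∀ (b c : B), τ (c * b) = op b • τ c) ∧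
      ∀ b : B, μ (τ b) = b) :
    ∃ (P' : Type u) (_ : AddCommGroup P') (_ : Module A P') (_ : Module Bᵐᵒᵖ P')
      (_ : SMulCommClass A Bᵐᵒᵖ P') (_ : Module k P') (_ : IsScalarTower k A P')
      (_ : IsScalarTower k Bᵐᵒᵖ P')
      (Q' : Type u) (_ : AddCommGroup Q') (_ : Module B Q') (_ : Module Aᵐᵒᵖ Q')
      (_ : SMulCommClass B Aᵐᵒᵖ Q') (_ : Module k Q') (_ : IsScalarTower k B Q')
      (_ : IsScalarTower k Aᵐᵒᵖ Q'),
      Module.Finite A P' ∧ Module.Projective A P' ∧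
      Module.Finite Bᵐᵒᵖ P' ∧ Module.Projective Bᵐᵒᵖ P' ∧
      Module.Finite B Q' ∧ Module.Projective B Q' ∧
      Module.Finite Aᵐᵒᵖ Q' ∧ Module.Projective Aᵐᵒᵖ Q' ∧
      ∃ ν' : Bal B P' Q' →+ A,
        (∀ (a : A) (x : Bal B P' Q'), ν' (a • x) = a * ν' x) ∧
        (∀ (a : A) (x : Bal B P' Q'), ν' (op a • x) = ν' x * a) ∧
        Function.Surjective ν' ∧
        (∃ σ : A →+ Bal B P' Q',
          (∀ (a c : A), σ (a * c) = a • σ c) ∧ (∀ (a c : A), σ (c * a) = op a • σ c) ∧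
          ∀ a : A, ν' (σ a) = a) ∧
        ∃ μ' : Bal A Q' P' →+ B,
          (∀ (b : B) (y : Bal A Q' P'), μ' (b • y) = b * μ' y) ∧
          (∀ (b : B) (y : Bal A Q' P'), μ' (op b • y) = μ' y * b) ∧
          Function.Surjective μ' ∧
          (∃ τ : B →+ Bal A Q' P',
            (∀ (b c : B), τ (b * c) = b • τ c) ∧ (∀ (b c : B), τ (c * b) = op b • τ c) ∧
            ∀ b : B, μ' (τ b) = b) ∧
          (∃ (n : ℕ) (q' : Fin n → Q') (p' : Fin n → P'),
            (∀ p : P', ∑ i, ν' (Bal.tmul B p (q' i)) • p' i = p) ∧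
            (∀ q : Q', ∑ i, op (ν' (Bal.tmul B (p' i) q)) • q' i = q)) ∧
          (∃ (m : ℕ) (pj : Fin m → P') (qj : Fin m → Q'),
            (∀ q : Q', ∑ j, μ' (Bal.tmul A q (pj j)) • qj j = q) ∧
            (∀ p : P', ∑ j, op (μ' (Bal.tmul A (qj j) p)) • pj j = p)) :=
  separable_equivalence_of_symmetric_algebras_is_symmetric_general hA hB ν hνl hνr hνsplit μ hμl hμr
    hμsplit
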